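/- (Tarski's theorem on the undefinability of arithmetical truth.) The set of Gödel numbers of sentences of the language of arithmetic that are true in the standard model ω is not definable in ω. -/

import Mathlib

namespace Boolos

/-- Terms of the first-order language of arithmetic: variables v₀,v₁,…, 0, successor s, +, ·. -/
inductive Term : Type
  | var : ℕ → Term
  | zero : Term
  | succ : Term → Term
  | add : Term → Term → Term
  | mul : Term → Term → Term
  deriving DecidableEq

/-- Formulas of the first-order language of arithmetic. -/
inductive Formula : Type
  | eq : Term → Term → Formula
  | lt : Term → Term → Formula
  | not : Formula → Formula
  | and : Formula → Formula → Formula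
  | or : Formula → Formula → Formula
  | imp : Formula → Formula → Formula
  | all : ℕ → Formula → Formula
  | ex : ℕ → Formula → Formula
  deriving DecidableEq

/-- The primitive symbols of the language (finitely many apart from the variables). -/
inductive Symbol : Type
  | zero : Symbol
  | succ : Symbol
  | plus : Symbol
  | times : Symbol
  | eqs : Symbol
  | lts : Symbol
  | nots : Symbol
  | ands : Symbol
  | ors : Symbol
  | imps : Symbol
  | alls : Symbol
  | exs : Symbol
  | var : ℕ → Symbol
  deriving DecidableEq

/-- Gödel numbers of the primitive symbols. -/
def Symbol.code : Symbol → ℕ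
  | .zero => 1
  | .succ => 2
  | .plus => 3
  | .times => 4
  | .eqs => 5
  | .lts => 6
  | .nots => 7
  | .ands => 8
  | .ors => 9
  | .imps => 10
  | .alls => 11
  | .exs => 12
  | .var n => 13 + n

/-- The sequence of symbols occurring in a term. -/
def Term.symbols : Term → List Symbol
  | .var i => [.var i]
  | .zero => [.zero]
  | .succ t => .succ :: t.symbols
  | .add t u => t.symbols ++ .plus :: u.symbols
  | .mul t u => t.symbols ++ .times :: u.symbols

/-- The sequence of symbols occurring in a formula. -/
def Formula.symbols : Formula → List Symbol
  | .eq t u => t.symbols ++ .eqs :: u.symbols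
  | .lt t u => t.symbols ++ .lts :: u.symbols
  | .not φ => .nots :: φ.symbols
  | .and φ ψ => φ.symbols ++ .ands :: ψ.symbols
  | .or φ ψ => φ.symbols ++ .ors :: ψ.symbols
  | .imp φ ψ => φ.symbols ++ .imps :: ψ.symbols
  | .all i φ => .alls :: .var i :: φ.symbols
  | .ex i φ => .exs :: .var i :: φ.symbols

/-- |e| : the length (number of symbols) of a term. -/
def Term.length (t : Term) : ℕ := t.symbols.length

/-- |μ| : the length (number of symbols) of a formula. -/
def Formula.length (φ : Formula) : ℕ := φ.symbols.length

/-- A fixed standard (pairing-based, injective) Gödel numbering of terms. -/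
def Term.code : Term → ℕ
  | .var i => Nat.pair 0 i
  | .zero => Nat.pair 1 0
  | .succ t => Nat.pair 2 t.code
  | .add t u => Nat.pair 3 (Nat.pair t.code u.code)
  | .mul t u => Nat.pair 4 (Nat.pair t.code u.code)

/-- ⌜μ⌝ : the Gödel number of a formula. -/
def Formula.gnum : Formula → ℕ
  | .eq t u => Nat.pair 0 (Nat.pair t.code u.code)
  | .lt t u => Nat.pair 1 (Nat.pair t.code u.code)
  | .not φ => Nat.pair 2 φ.gnum
  | .and φ ψ => Nat.pair 3 (Nat.pair φ.gnum ψ.gnum)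
  | .or φ ψ => Nat.pair 4 (Nat.pair φ.gnum ψ.gnum)
  | .imp φ ψ => Nat.pair 5 (Nat.pair φ.gnum ψ.gnum)
  | .all i φ => Nat.pair 6 (Nat.pair i φ.gnum)
  | .ex i φ => Nat.pair 7 (Nat.pair i φ.gnum)

/-- The variables occurring in a term. -/
def Term.varsOf : Term → Finset ℕ
  | .var i => {i}
  | .zero => ∅
  | .succ t => t.varsOf
  | .add t u => t.varsOf ∪ u.varsOf
  | .mul t u => t.varsOf ∪ u.varsOf

/-- All variables (free or bound) occurring in a formula. -/
def Formula.allVars : Formula → Finset ℕ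
  | .eq t u => t.varsOf ∪ u.varsOf
  | .lt t u => t.varsOf ∪ u.varsOf
  | .not φ => φ.allVars
  | .and φ ψ => φ.allVars ∪ ψ.allVars
  | .or φ ψ => φ.allVars ∪ ψ.allVars
  | .imp φ ψ => φ.allVars ∪ ψ.allVars
  | .all i φ => insert i φ.allVars
  | .ex i φ => insert i φ.allVars

/-- The free variables of a formula. -/
def Formula.freeVars : Formula → Finset ℕ
  | .eq t u => t.varsOf ∪ u.varsOf
  | .lt t u => t.varsOf ∪ u.varsOf
  | .not φ => φ.freeVars
  | .and φ ψ => φ.freeVars ∪ ψ.freeVars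
  | .or φ ψ => φ.freeVars ∪ ψ.freeVars
  | .imp φ ψ => φ.freeVars ∪ ψ.freeVars
  | .all i φ => φ.freeVars.erase i
  | .ex i φ => φ.freeVars.erase i

/-- Substitution of a term for a variable in a term. -/
def Term.subst : Term → ℕ → Term → Term
  | .var i, x, s => if i = x then s else .var i
  | .zero, _, _ => .zero
  | .succ t, x, s => .succ (t.subst x s)
  | .add t u, x, s => .add (t.subst x s) (u.subst x s)
  | .mul t u, x, s => .mul (t.subst x s) (u.subst x s)

/-- Substitution of a term for the free occurrences of a variable in a formula. -/
def Formula.subst : Formula → ℕ → Term → Formula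
  | .eq t u, x, s => .eq (t.subst x s) (u.subst x s)
  | .lt t u, x, s => .lt (t.subst x s) (u.subst x s)
  | .not φ, x, s => .not (φ.subst x s)
  | .and φ ψ, x, s => .and (φ.subst x s) (ψ.subst x s)
  | .or φ ψ, x, s => .or (φ.subst x s) (ψ.subst x s)
  | .imp φ ψ, x, s => .imp (φ.subst x s) (ψ.subst x s)
  | .all i φ, x, s => if i = x then .all i φ else .all i (φ.subst x s)
  | .ex i φ, x, s => if i = x then .ex i φ else .ex i (φ.subst x s)

/-- The number of occurrences of a variable in a term. -/
def Term.countOcc : Term → ℕ → ℕ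
  | .var i, x => if i = x then 1 else 0
  | .zero, _ => 0
  | .succ t, x => t.countOcc x
  | .add t u, x => t.countOcc x + u.countOcc x
  | .mul t u, x => t.countOcc x + u.countOcc x

/-- The number of free occurrences of a variable in a formula. -/
def Formula.countFreeOcc : Formula → ℕ → ℕ
  | .eq t u, x => t.countOcc x + u.countOcc x
  | .lt t u, x => t.countOcc x + u.countOcc x
  | .not φ, x => φ.countFreeOcc x
  | .and φ ψ, x => φ.countFreeOcc x + ψ.countFreeOcc x
  | .or φ ψ, x => φ.countFreeOcc x + ψ.countFreeOcc x
  | .imp φ ψ, x => φ.countFreeOcc x + ψ.countFreeOcc x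
  | .all i φ, x => if i = x then 0 else φ.countFreeOcc x
  | .ex i φ, x => if i = x then 0 else φ.countFreeOcc x

/-- The numeral s s … s 0 for a natural number. -/
def numeral : ℕ → Term
  | 0 => .zero
  | n + 1 => .succ (numeral n)

/-- Structures for the language of arithmetic. -/
structure Struct where
  carrier : Type
  zero : carrier
  succ : carrier → carrier
  add : carrier → carrier → carrier
  mul : carrier → carrier → carrier
  lt : carrier → carrier → Prop

/-- The value of a term in a structure under an assignment. -/
def Term.val (M : Struct) (v : ℕ → M.carrier) : Term → M.carrier
  | .var i => v i
  | .zero => M.zero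
  | .succ t => M.succ (Term.val M v t)
  | .add t u => M.add (Term.val M v t) (Term.val M v u)
  | .mul t u => M.mul (Term.val M v t) (Term.val M v u)

/-- Satisfaction of a formula in a structure under an assignment. -/
def Formula.Realize (M : Struct) : (ℕ → M.carrier) → Formula → Prop
  | v, .eq t u => Term.val M v t = Term.val M v u
  | v, .lt t u => M.lt (Term.val M v t) (Term.val M v u)
  | v, .not φ => ¬ Formula.Realize M v φ
  | v, .and φ ψ => Formula.Realize M v φ ∧ Formula.Realize M v ψ
  | v, .or φ ψ => Formula.Realize M v φ ∨ Formula.Realize M v ψ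
  | v, .imp φ ψ => Formula.Realize M v φ → Formula.Realize M v ψ
  | v, .all i φ => ∀ a : M.carrier, Formula.Realize M (Function.update v i a) φ
  | v, .ex i φ => ∃ a : M.carrier, Formula.Realize M (Function.update v i a) φ

/-- ω : the standard model of arithmetic. -/
@[reducible] def stdModel : Struct :=
  { carrier := ℕ, zero := 0, succ := Nat.succ, add := (· + ·), mul := (· * ·),
    lt := (· < ·) }

/-- A formula is true if it holds in the standard model ω (under every assignment). -/
def IsTrue (φ : Formula) : Prop := ∀ v : ℕ → ℕ, Formula.Realize stdModel v φ

/-- The value of a (closed) term in the standard model ω. -/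
def Term.valNat (t : Term) : ℕ := Term.val stdModel (fun _ => 0) t

/-- A sentence is a formula with no free variables. -/
def Formula.IsSentence (φ : Formula) : Prop := φ.freeVars = ∅

/-- Provability from a theory; by the Gödel completeness theorem, identified with
semantic consequence. -/
def Proves (T : Set Formula) (φ : Formula) : Prop :=
  ∀ (M : Struct) (v : ℕ → M.carrier),
    (∀ ψ ∈ T, Formula.Realize M v ψ) → Formula.Realize M v φ

/-- Consistency: no formula is both provable and refutable. -/
def Consistent (T : Set Formula) : Prop :=
  ¬ ∃ φ : Formula, Proves T φ ∧ Proves T (.not φ)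

/-- The biconditional, as an abbreviation. -/
def Formula.iffF (φ ψ : Formula) : Formula := .and (.imp φ ψ) (.imp ψ φ)

def v0 : Term := .var 0
def v1 : Term := .var 1
def v2 : Term := .var 2

/-- The axioms of Robinson arithmetic Q (with < defined as usual). -/
def QAxioms : Set Formula :=
  { .all 0 (.all 1 (.imp (.eq (.succ v0) (.succ v1)) (.eq v0 v1))),
    .all 0 (.not (.eq (.succ v0) .zero)),
    .all 0 (.imp (.not (.eq v0 .zero)) (.ex 1 (.eq v0 (.succ v1)))),
    .all 0 (.eq (.add v0 .zero) v0),
    .all 0 (.all 1 (.eq (.add v0 (.succ v1)) (.succ (.add v0 v1)))),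
    .all 0 (.eq (.mul v0 .zero) .zero),
    .all 0 (.all 1 (.eq (.mul v0 (.succ v1)) (.add (.mul v0 v1) v0))),
    .all 0 (.all 1 (Formula.iffF (.lt v0 v1) (.ex 2 (.eq (.add v2 (.succ v0)) v1)))) }

/-- Pr_S : the set of Gödel numbers of sentences provable in S. -/
def PrSet (T : Set Formula) : Set ℕ :=
  {m | ∃ σ : Formula, σ.IsSentence ∧ Proves T σ ∧ m = σ.gnum}

/-- A formula μ with at most the free variable v₀ names the number i in T
if T ⊢ (∀v₀)(μ(v₀) ↔ v₀ = i). -/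
def Names (T : Set Formula) (μ : Formula) (i : ℕ) : Prop :=
  μ.freeVars ⊆ {0} ∧ Proves T (.all 0 (Formula.iffF μ (.eq v0 (numeral i))))

/-- i is named in T by some formula of length < m. -/
def Nameable (T : Set Formula) (m i : ℕ) : Prop :=
  ∃ μ : Formula, μ.length < m ∧ Names T μ i

/-- φ(v₀) defines the set A in the standard model ω. -/
def DefinesSet (φ : Formula) (A : Set ℕ) : Prop :=
  φ.freeVars ⊆ {0} ∧ ∀ i : ℕ, i ∈ A ↔ IsTrue (φ.subst 0 (numeral i))

/-- A set of natural numbers is definable (in ω). -/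
def Definable (A : Set ℕ) : Prop := ∃ φ : Formula, DefinesSet φ A

/-- φ(v₀,v₁) defines the binary relation R in the standard model ω. -/
def DefinesRel (φ : Formula) (R : ℕ → ℕ → Prop) : Prop :=
  φ.freeVars ⊆ {0, 1} ∧
    ∀ i j : ℕ, R i j ↔ IsTrue ((φ.subst 0 (numeral i)).subst 1 (numeral j))

/-- The relation B of Boolos's construction: (i,j) ∈ B iff some formula μ with at most
the free variable v₀, with ⌜μ⌝ < g(j) and |μ| < j, names i. -/
def BRel (T : Set Formula) (g : ℕ → ℕ) (i j : ℕ) : Prop :=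
  ∃ μ : Formula, μ.gnum < g j ∧ μ.length < j ∧ Names T μ i

/-- g is a recursive function bounding Gödel numbers in terms of length, as in the
construction: whenever all variables of μ are among the first j ones and |μ| < j,
we have ⌜μ⌝ < g(j). -/
def GoodBound (g : ℕ → ℕ) : Prop :=
  Computable g ∧
    ∀ (μ : Formula) (j : ℕ), μ.allVars ⊆ Finset.range j → μ.length < j → μ.gnum < g j

/-- ψ(v₀,v₁) ≔ ¬φ(v₀,v₁) ∧ (∀v₂ < v₀) φ(v₂,v₁). -/
def psiOf (φ : Formula) : Formula :=
  .and (.not φ) (.all 2 (.imp (.lt v2 v0) (φ.subst 0 v2)))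

/-- The closed term t ≔ 10·(k·k). -/
def tTerm (k : ℕ) : Term := .mul (numeral 10) (.mul (numeral k) (numeral k))

/-!
Substituting a numeral into a formula is, on Gödel numbers, a primitive recursive operation, so the
diagonal function `⌜φ⌝ ↦ ⌜φ(⌜φ⌝)⌝` is primitive recursive. The graph of every primitive recursive
function is definable in ω: composition is handled by existential quantification, and primitive
recursion by Gödel's β-function, which codes the finite table of values of a recursion by a single
number. If `T(v₀)` defined the set of true sentences, then for `ψ(v₀) := ¬T(diag(v₀))` the
sentence `ψ(⌜ψ⌝)`, whose Gödel number is `diag ⌜ψ⌝`, would be true if and only if it is not.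
-/

open Function

/-! ### Syntax -/

theorem Term.val_congr {M : Struct} {v w : ℕ → M.carrier} {t : Term}
    (h : ∀ i ∈ t.varsOf, v i = w i) : t.val M v = t.val M w := by
  induction t with
  | var i => exact h i (Finset.mem_singleton_self i)
  | zero => rfl
  | succ t ih => exact congrArg M.succ (ih h)
  | add t u iht ihu | mul t u iht ihu =>
    simp only [Term.varsOf, Finset.mem_union] at h
    simp only [Term.val, iht fun i hi => h i (.inl hi), ihu fun i hi => h i (.inr hi)]

theorem Formula.realize_congr {M : Struct} {φ : Formula} {v w : ℕ → M.carrier}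
    (h : ∀ i ∈ φ.freeVars, v i = w i) : φ.Realize M v ↔ φ.Realize M w := by
  induction φ generalizing v w with
  | eq t u | lt t u =>
    simp only [Formula.freeVars, Finset.mem_union] at h
    simp only [Formula.Realize, Term.val_congr fun i hi => h i (.inl hi),
      Term.val_congr (t := u) fun i hi => h i (.inr hi)]
  | not φ ih => exact not_congr (ih h)
  | and φ ψ ihφ ihψ | or φ ψ ihφ ihψ | imp φ ψ ihφ ihψ =>
    simp only [Formula.freeVars, Finset.mem_union] at h
    simp only [Formula.Realize, ihφ fun i hi => h i (.inl hi), ihψ fun i hi => h i (.inr hi)]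
  | all j φ ih | ex j φ ih =>
    have hupdate : ∀ a, ∀ i ∈ φ.freeVars, update v j a i = update w j a i := fun a i hi => by
      by_cases hij : i = j
      · simp [hij]
      · simp [update_of_ne hij, h i (Finset.mem_erase.2 ⟨hij, hi⟩)]
    simp only [Formula.Realize, fun a => ih (hupdate a)]

theorem Term.val_subst {M : Struct} {x : ℕ} {s t : Term} {v : ℕ → M.carrier} :
    (t.subst x s).val M v = t.val M (update v x (s.val M v)) := by
  induction t with
  | var i => by_cases h : i = x <;> simp [Term.subst, Term.val, h]
  | zero => rfl
  | succ t ih | add t _ ih _ | mul t _ ih _ => simp [Term.subst, Term.val, *]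

theorem Term.varsOf_subst {x : ℕ} {s t : Term} :
    (t.subst x s).varsOf ⊆ t.varsOf.erase x ∪ s.varsOf := by
  induction t with
  | var i => by_cases h : i = x <;> simp [Term.subst, Term.varsOf, h]
  | zero => simp [Term.subst, Term.varsOf]
  | succ t ih => exact ih
  | add t u iht ihu | mul t u iht ihu =>
    simp only [Term.subst, Term.varsOf, Finset.erase_union_distrib]
    exact Finset.union_subset (iht.trans (by gcongr; simp)) (ihu.trans (by gcongr; simp))

theorem Formula.freeVars_subst {x : ℕ} {s : Term} {φ : Formula} :
    (φ.subst x s).freeVars ⊆ φ.freeVars.erase x ∪ s.varsOf := by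
  induction φ with
  | eq t u | lt t u =>
    simp only [Formula.subst, Formula.freeVars, Finset.erase_union_distrib]
    exact Finset.union_subset (Term.varsOf_subst.trans (by gcongr; simp))
      (Term.varsOf_subst.trans (by gcongr; simp))
  | not φ ih => exact ih
  | and φ ψ ihφ ihψ | or φ ψ ihφ ihψ | imp φ ψ ihφ ihψ =>
    simp only [Formula.subst, Formula.freeVars, Finset.erase_union_distrib]
    exact Finset.union_subset (ihφ.trans (by gcongr; simp)) (ihψ.trans (by gcongr; simp))
  | all i φ ih | ex i φ ih =>
    by_cases h : i = x
    · subst h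
      simp [Formula.subst, Formula.freeVars]
    · simp only [Formula.subst, if_neg h, Formula.freeVars]
      refine (Finset.erase_subset_erase i ih).trans ?_
      rw [Finset.erase_union_distrib, Finset.erase_right_comm]
      exact Finset.union_subset_union le_rfl (Finset.erase_subset _ _)

theorem Formula.realize_subst {M : Struct} {x : ℕ} {s : Term} {φ : Formula}
    {v : ℕ → M.carrier} (hs : ∀ y ∈ s.varsOf, y ∉ φ.allVars) :
    (φ.subst x s).Realize M v ↔ φ.Realize M (update v x (s.val M v)) := by
  induction φ generalizing v with
  | eq t u | lt t u => simp [Formula.subst, Formula.Realize, Term.val_subst]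
  | not φ ih => exact not_congr (ih hs)
  | and φ ψ ihφ ihψ | or φ ψ ihφ ihψ | imp φ ψ ihφ ihψ =>
    simp only [Formula.allVars, Finset.mem_union, not_or] at hs
    simp only [Formula.subst, Formula.Realize, ihφ fun y hy => (hs y hy).1,
      ihψ fun y hy => (hs y hy).2]
  | all i φ ih | ex i φ ih =>
    simp only [Formula.allVars, Finset.mem_insert, not_or] at hs
    by_cases h : i = x
    · subst h
      simp [Formula.subst, Formula.Realize]
    · have hval : ∀ a, s.val M (update v i a) = s.val M v := fun a =>
        Term.val_congr fun y hy => update_of_ne (hs y hy).1 _ _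
      simp only [Formula.subst, if_neg h, Formula.Realize, ih fun y hy => (hs y hy).2, hval,
        update_comm h]

theorem varsOf_numeral (n : ℕ) : (numeral n).varsOf = ∅ := by
  induction n with
  | zero => rfl
  | succ n ih => exact ih

theorem val_numeral (v : ℕ → ℕ) (n : ℕ) : (numeral n).val stdModel v = n := by
  induction n with
  | zero => rfl
  | succ n ih => exact congrArg Nat.succ ih

theorem Formula.freeVars_subst_eq_empty {φ : Formula} (hφ : φ.freeVars ⊆ {0}) {s : Term}
    (hs : s.varsOf = ∅) : (φ.subst 0 s).freeVars = ∅ :=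
  Finset.subset_empty.1 <| Formula.freeVars_subst.trans <| by
    rw [(Finset.erase_eq_empty_iff _ _).2 (Finset.subset_singleton_iff.1 hφ), hs,
      Finset.union_empty]

theorem Formula.realize_subst_numeral {φ : Formula} {v : ℕ → ℕ} (n : ℕ) :
    (φ.subst 0 (numeral n)).Realize stdModel v ↔ φ.Realize stdModel (update v 0 n) := by
  rw [Formula.realize_subst (by simp [varsOf_numeral]), val_numeral]

theorem Term.code_injective : Injective Term.code := by
  intro t
  induction t with
  | var _ | zero | succ t ih | add t₁ t₂ ih₁ ih₂ | mul t₁ t₂ ih₁ ih₂ =>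
    intro u h
    cases u <;> simp only [Term.code, Nat.pair_eq_pair] at h <;> grind

theorem Formula.gnum_injective : Injective Formula.gnum := by
  intro φ
  induction φ with
  | eq t u | lt t u | not φ ih | and φ ψ ihφ ihψ | or φ ψ ihφ ihψ | imp φ ψ ihφ ihψ
  | all i φ ih | ex i φ ih =>
    intro χ h
    cases χ <;> simp only [Formula.gnum, Nat.pair_eq_pair] at h <;> grind [Term.code_injective]

/-! ### Pairing, remainders and Gödel's β-function -/

theorem _root_.Nat.unpair_snd_lt {x : ℕ} (h : x.unpair.1 ≠ 0) : x.unpair.2 < x := by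
  have := Nat.unpair_add_le x
  omega

theorem _root_.Nat.eq_unpair_fst_iff {y x : ℕ} : y = x.unpair.1 ↔ ∃ b, x = Nat.pair y b := by
  constructor
  · rintro rfl
    exact ⟨x.unpair.2, (Nat.pair_unpair x).symm⟩
  · rintro ⟨b, rfl⟩
    simp

theorem _root_.Nat.eq_unpair_snd_iff {y x : ℕ} : y = x.unpair.2 ↔ ∃ a, x = Nat.pair a y := by
  constructor
  · rintro rfl
    exact ⟨x.unpair.1, (Nat.pair_unpair x).symm⟩
  · rintro ⟨a, rfl⟩
    simp

theorem _root_.Nat.eq_mod_iff {r a b : ℕ} :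
    r = a % b ↔ b = 0 ∧ r = a ∨ r < b ∧ ∃ q, a = q * b + r := by
  rcases Nat.eq_zero_or_pos b with rfl | hb
  · simp
  constructor
  · rintro rfl
    exact .inr ⟨Nat.mod_lt a hb, a / b, (Nat.div_add_mod' a b).symm⟩
  · rintro (⟨rfl, -⟩ | ⟨hr, q, rfl⟩)
    · omega
    · rw [Nat.mul_add_mod_self_right, Nat.mod_eq_of_lt hr]

theorem exists_beta_eq (f : ℕ → ℕ) (n : ℕ) : ∃ c, ∀ i ≤ n, Nat.beta c i = f i :=
  ⟨Nat.unbeta ((List.range (n + 1)).map f), fun i hi => by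
    simpa using Nat.beta_unbeta_coe ((List.range (n + 1)).map f) ⟨i, by simpa using hi⟩⟩

def IsBetaRecTable (a : ℕ) (s : ℕ → ℕ → ℕ) (n c : ℕ) : Prop :=
  Nat.beta c 0 = a ∧ ∀ k < n, Nat.beta c (k + 1) = s k (Nat.beta c k)

theorem eq_rec_iff_exists_isBetaRecTable {a : ℕ} {s : ℕ → ℕ → ℕ} {n y : ℕ} :
    y = Nat.rec (motive := fun _ => ℕ) a s n ↔ ∃ c, IsBetaRecTable a s n c ∧ y = Nat.beta c n := by
  constructor
  · rintro rfl
    obtain ⟨c, hc⟩ := exists_beta_eq (fun k => Nat.rec (motive := fun _ => ℕ) a s k) n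
    exact ⟨c, ⟨hc 0 n.zero_le, fun k hk => by rw [hc (k + 1) hk, hc k hk.le]⟩, (hc n le_rfl).symm⟩
  · rintro ⟨c, ⟨h0, hs⟩, rfl⟩
    suffices ∀ k ≤ n, Nat.beta c k = Nat.rec (motive := fun _ => ℕ) a s k from this n le_rfl
    intro k hk
    induction k with
    | zero => exact h0
    | succ k ih => rw [hs k hk, ih (by omega)]

/-! ### Definability in ω -/

theorem _root_.DependsOn.apply_update {ι α β : Type*} [DecidableEq ι] {F : (ι → α) → β}
    {S : Set ι} (hF : DependsOn F S) {x : ι} (hx : x ∉ S) (v : ι → α) (a : α) :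
    F (update v x a) = F v :=
  hF fun _ hi => update_of_ne (ne_of_mem_of_not_mem hi hx) a v

theorem exists_fresh (z : ℕ) (S : Finset ℕ) : ∃ b ∉ S, z ≠ b :=
  let ⟨b, hb⟩ := Infinite.exists_notMem_finset (insert z S)
  ⟨b, fun h => hb (Finset.mem_insert_of_mem h), fun h => hb (h ▸ Finset.mem_insert_self z S)⟩

theorem exists_fresh₂ (T : Finset ℕ) : ∃ x y, x ∉ insert y T ∧ y ∉ T :=
  let ⟨y, hy⟩ := Infinite.exists_notMem_finset T
  let ⟨x, hx⟩ := Infinite.exists_notMem_finset (insert y T)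
  ⟨x, y, hx, hy⟩

def DefinablePred (S : Finset ℕ) (P : (ℕ → ℕ) → Prop) : Prop :=
  ∃ φ : Formula, φ.freeVars ⊆ S ∧ ∀ v, φ.Realize stdModel v ↔ P v

/-- The graph is definable with the value in every variable outside `S`, so that compositions can
always store intermediate values in fresh variables. -/
structure DefinableFun (S : Finset ℕ) (F : (ℕ → ℕ) → ℕ) : Prop where
  dependsOn : DependsOn F S
  graph : ∀ z ∉ S, DefinablePred (insert z S) fun v => v z = F v

theorem DefinablePred.mono {S T : Finset ℕ} {P : (ℕ → ℕ) → Prop} (h : DefinablePred S P)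
    (hST : S ⊆ T) : DefinablePred T P :=
  let ⟨φ, hφ, hφP⟩ := h
  ⟨φ, hφ.trans hST, hφP⟩

theorem DefinableFun.mono {S T : Finset ℕ} {F : (ℕ → ℕ) → ℕ} (h : DefinableFun S F)
    (hST : S ⊆ T) : DefinableFun T F where
  dependsOn := h.dependsOn.mono (Finset.coe_subset.2 hST)
  graph z hz := (h.graph z fun hzS => hz (hST hzS)).mono (Finset.insert_subset_insert z hST)

namespace DefinablePred

variable {S T : Finset ℕ} {P Q : (ℕ → ℕ) → Prop}

theorem congr (h : DefinablePred S P) (hPQ : ∀ v, P v ↔ Q v) : DefinablePred S Q :=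
  let ⟨φ, hφ, hφP⟩ := h
  ⟨φ, hφ, fun v => (hφP v).trans (hPQ v)⟩

theorem not (h : DefinablePred S P) : DefinablePred S fun v => ¬ P v :=
  let ⟨φ, hφ, hφP⟩ := h
  ⟨.not φ, hφ, fun v => not_congr (hφP v)⟩

theorem and (hP : DefinablePred S P) (hQ : DefinablePred S Q) :
    DefinablePred S fun v => P v ∧ Q v :=
  let ⟨φ, hφ, hφP⟩ := hP
  let ⟨ψ, hψ, hψQ⟩ := hQ
  ⟨.and φ ψ, Finset.union_subset hφ hψ, fun v => and_congr (hφP v) (hψQ v)⟩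

theorem or (hP : DefinablePred S P) (hQ : DefinablePred S Q) :
    DefinablePred S fun v => P v ∨ Q v :=
  let ⟨φ, hφ, hφP⟩ := hP
  let ⟨ψ, hψ, hψQ⟩ := hQ
  ⟨.or φ ψ, Finset.union_subset hφ hψ, fun v => or_congr (hφP v) (hψQ v)⟩

theorem imp (hP : DefinablePred S P) (hQ : DefinablePred S Q) :
    DefinablePred S fun v => P v → Q v :=
  let ⟨φ, hφ, hφP⟩ := hP
  let ⟨ψ, hψ, hψQ⟩ := hQ
  ⟨.imp φ ψ, Finset.union_subset hφ hψ, fun v => imp_congr (hφP v) (hψQ v)⟩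

theorem ex (x : ℕ) (h : DefinablePred S P) :
    DefinablePred (S.erase x) fun v => ∃ a, P (update v x a) :=
  let ⟨φ, hφ, hφP⟩ := h
  ⟨.ex x φ, Finset.erase_subset_erase x hφ, fun _ => exists_congr fun _ => hφP _⟩

theorem all (x : ℕ) (h : DefinablePred S P) :
    DefinablePred (S.erase x) fun v => ∀ a, P (update v x a) :=
  let ⟨φ, hφ, hφP⟩ := h
  ⟨.all x φ, Finset.erase_subset_erase x hφ, fun _ => forall_congr' fun _ => hφP _⟩

theorem eq_var (x y : ℕ) : DefinablePred {x, y} fun v => v x = v y :=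
  ⟨.eq (.var x) (.var y), by simp [Formula.freeVars, Term.varsOf], fun _ => Iff.rfl⟩

theorem lt_var (x y : ℕ) : DefinablePred {x, y} fun v => v x < v y :=
  ⟨.lt (.var x) (.var y), by simp [Formula.freeVars, Term.varsOf], fun _ => Iff.rfl⟩

theorem subst {x : ℕ} {F : (ℕ → ℕ) → ℕ} (h : DefinablePred (insert x T) P) (hx : x ∉ T)
    (hF : DefinableFun T F) : DefinablePred T fun v => P (update v x (F v)) :=
  (((hF.graph x hx).and h).ex x).mono (Finset.erase_insert_subset x T) |>.congr fun v => by
    simp [hF.dependsOn.apply_update hx]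

theorem subst₂ {x y : ℕ} {F G : (ℕ → ℕ) → ℕ} (h : DefinablePred (insert x (insert y T)) P)
    (hx : x ∉ insert y T) (hy : y ∉ T) (hF : DefinableFun T F) (hG : DefinableFun T G) :
    DefinablePred T fun v => P (update (update v y (G v)) x (F v)) :=
  ((h.subst hx (hF.mono (Finset.subset_insert y T))).subst hy hG).congr fun v => by
    rw [hF.dependsOn.apply_update hy]

theorem comp₂ {F G : (ℕ → ℕ) → ℕ} {R : ℕ → ℕ → Prop}
    (hR : ∀ x y, DefinablePred {x, y} fun v => R (v x) (v y))
    (hF : DefinableFun S F) (hG : DefinableFun S G) : DefinablePred S fun v => R (F v) (G v) := by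
  obtain ⟨x, y, hx, hy⟩ := exists_fresh₂ S
  have hxy : x ≠ y := fun h => hx (h ▸ Finset.mem_insert_self y S)
  refine (((hR x y).mono ?_).subst₂ hx hy hF hG).congr fun v => ?_
  · exact Finset.insert_subset_insert x (Finset.singleton_subset_iff.2 (Finset.mem_insert_self y S))
  · rw [update_self, update_of_ne hxy.symm, update_self]

theorem eq {F G : (ℕ → ℕ) → ℕ} (hF : DefinableFun S F) (hG : DefinableFun S G) :
    DefinablePred S fun v => F v = G v :=
  comp₂ eq_var hF hG

theorem lt {F G : (ℕ → ℕ) → ℕ} (hF : DefinableFun S F) (hG : DefinableFun S G) :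
    DefinablePred S fun v => F v < G v :=
  comp₂ lt_var hF hG

end DefinablePred

namespace DefinableFun

variable {S : Finset ℕ} {F G : (ℕ → ℕ) → ℕ}

theorem var {x : ℕ} (hx : x ∈ S) : DefinableFun S fun v => v x where
  dependsOn _ _ h := h x hx
  graph z _ := (DefinablePred.eq_var z x).mono
    (Finset.insert_subset_insert z (Finset.singleton_subset_iff.2 hx))

theorem const (S : Finset ℕ) (n : ℕ) : DefinableFun S fun _ => n where
  dependsOn _ _ _ := rfl
  graph z _ := ⟨.eq (.var z) (numeral n), by simp [Formula.freeVars, Term.varsOf, varsOf_numeral],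
    fun v => by simp [Formula.Realize, Term.val, val_numeral]⟩

theorem comp₂ {f : ℕ → ℕ → ℕ}
    (hf : ∀ x y z, DefinablePred {x, y, z} fun v => v z = f (v x) (v y))
    (hF : DefinableFun S F) (hG : DefinableFun S G) : DefinableFun S fun v => f (F v) (G v) where
  dependsOn _ _ h := congrArg₂ f (hF.dependsOn h) (hG.dependsOn h)
  graph z _ := by
    obtain ⟨x, y, hx, hy⟩ := exists_fresh₂ (insert z S)
    have hxz : x ≠ z := fun h => hx (by simp [h])
    have hyz : y ≠ z := fun h => hy (by simp [h])
    have hxy : x ≠ y := fun h => hx (by simp [h])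
    refine (((hf x y z).mono ?_).subst₂ hx hy
      (hF.mono (Finset.subset_insert z S)) (hG.mono (Finset.subset_insert z S))).congr fun v => ?_
    · exact Finset.insert_subset_insert x (Finset.insert_subset_insert y
        (Finset.singleton_subset_iff.2 (Finset.mem_insert_self z S)))
    · rw [update_of_ne hxz.symm, update_of_ne hyz.symm, update_self, update_of_ne hxy.symm,
        update_self]

theorem add (hF : DefinableFun S F) (hG : DefinableFun S G) :
    DefinableFun S fun v => F v + G v :=
  comp₂ (fun x y z => ⟨.eq (.var z) (.add (.var x) (.var y)),
    by simp [Formula.freeVars, Term.varsOf, Finset.insert_subset_iff], fun _ => Iff.rfl⟩) hF hG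

theorem mul (hF : DefinableFun S F) (hG : DefinableFun S G) :
    DefinableFun S fun v => F v * G v :=
  comp₂ (fun x y z => ⟨.eq (.var z) (.mul (.var x) (.var y)),
    by simp [Formula.freeVars, Term.varsOf, Finset.insert_subset_iff], fun _ => Iff.rfl⟩) hF hG

theorem pair (hF : DefinableFun S F) (hG : DefinableFun S G) :
    DefinableFun S fun v => Nat.pair (F v) (G v) where
  dependsOn _ _ h := congrArg₂ Nat.pair (hF.dependsOn h) (hG.dependsOn h)
  graph z _ := by
    have hF' := hF.mono (Finset.subset_insert z S)
    have hG' := hG.mono (Finset.subset_insert z S)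
    have hz := var (Finset.mem_insert_self z S)
    refine (((DefinablePred.lt hF' hG').and (.eq hz ((hG'.mul hG').add hF'))).or
      ((DefinablePred.lt hF' hG').not.and (.eq hz (((hF'.mul hF').add hF').add hG')))).congr
      fun v => ?_
    unfold Nat.pair
    split_ifs <;> simp [*]

theorem unpair_fst (hF : DefinableFun S F) : DefinableFun S fun v => (F v).unpair.1 where
  dependsOn _ _ h := by simp only [hF.dependsOn h]
  graph z _ := by
    obtain ⟨b, hbS, hbz⟩ := exists_fresh z S
    have hT : insert z S ⊆ insert b (insert z S) := Finset.subset_insert b _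
    refine ((DefinablePred.eq (hF.mono ((Finset.subset_insert z S).trans hT))
      ((var (hT (Finset.mem_insert_self z S))).pair (var (Finset.mem_insert_self b _)))).ex b
      |>.mono (Finset.erase_insert_subset b _)).congr fun v => ?_
    simp [update_of_ne hbz, hF.dependsOn.apply_update hbS, Nat.eq_unpair_fst_iff]

theorem unpair_snd (hF : DefinableFun S F) : DefinableFun S fun v => (F v).unpair.2 where
  dependsOn _ _ h := by simp only [hF.dependsOn h]
  graph z _ := by
    obtain ⟨a, haS, haz⟩ := exists_fresh z S
    have hT : insert z S ⊆ insert a (insert z S) := Finset.subset_insert a _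
    refine ((DefinablePred.eq (hF.mono ((Finset.subset_insert z S).trans hT))
      ((var (Finset.mem_insert_self a _)).pair (var (hT (Finset.mem_insert_self z S))))).ex a
      |>.mono (Finset.erase_insert_subset a _)).congr fun v => ?_
    simp [update_of_ne haz, hF.dependsOn.apply_update haS, Nat.eq_unpair_snd_iff]

theorem mod (hF : DefinableFun S F) (hG : DefinableFun S G) :
    DefinableFun S fun v => F v % G v where
  dependsOn _ _ h := congrArg₂ (· % ·) (hF.dependsOn h) (hG.dependsOn h)
  graph z _ := by
    obtain ⟨q, hqS, hqz⟩ := exists_fresh z S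
    have hT : insert z S ⊆ insert q (insert z S) := Finset.subset_insert q _
    have hF' := hF.mono (Finset.subset_insert z S)
    have hG' := hG.mono (Finset.subset_insert z S)
    have hz := var (Finset.mem_insert_self z S)
    have hquot := ((DefinablePred.eq (hF'.mono hT)
      (((var (Finset.mem_insert_self q _)).mul (hG'.mono hT)).add (hz.mono hT))).ex q).mono
      (Finset.erase_insert_subset q _)
    refine (((DefinablePred.eq hG' (const _ 0)).and (.eq hz hF')).or
      ((DefinablePred.lt hz hG').and hquot)).congr fun v => ?_
    simp [update_of_ne hqz, hF.dependsOn.apply_update hqS, hG.dependsOn.apply_update hqS,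
      Nat.eq_mod_iff]

theorem beta {C I : (ℕ → ℕ) → ℕ} (hC : DefinableFun S C) (hI : DefinableFun S I) :
    DefinableFun S fun v => Nat.beta (C v) (I v) :=
  hC.unpair_fst.mod (((hI.add (const S 1)).mul hC.unpair_snd).add (const S 1))

end DefinableFun

def DefinableOp₂ (S : Finset ℕ) (s : (ℕ → ℕ) → ℕ → ℕ → ℕ) : Prop :=
  ∀ ⦃T K L⦄, S ⊆ T → DefinableFun T K → DefinableFun T L →
    DefinableFun T fun v => s v (K v) (L v)

namespace DefinableOp₂

variable {S : Finset ℕ} {s : (ℕ → ℕ) → ℕ → ℕ → ℕ}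

theorem mono (hs : DefinableOp₂ S s) {T : Finset ℕ} (hST : S ⊆ T) : DefinableOp₂ T s :=
  fun _ _ _ hT => hs (hST.trans hT)

theorem dependsOn (hs : DefinableOp₂ S s) : DependsOn s S :=
  fun _ _ h => funext₂ fun k l =>
    (hs le_rfl (DefinableFun.const S k) (DefinableFun.const S l)).dependsOn h

end DefinableOp₂

namespace DefinableFun

variable {S : Finset ℕ} {A N : (ℕ → ℕ) → ℕ} {s : (ℕ → ℕ) → ℕ → ℕ → ℕ}

theorem isBetaRecTable {C : (ℕ → ℕ) → ℕ} (hA : DefinableFun S A) (hN : DefinableFun S N)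
    (hC : DefinableFun S C) (hs : DefinableOp₂ S s) :
    DefinablePred S fun v => IsBetaRecTable (A v) (s v) (N v) (C v) := by
  obtain ⟨k, hk⟩ := Infinite.exists_notMem_finset S
  have hST : S ⊆ insert k S := Finset.subset_insert k S
  have hk' := var (Finset.mem_insert_self k S)
  have hC' := hC.mono hST
  have hstep := (DefinablePred.lt hk' (hN.mono hST)).imp
    (.eq (hC'.beta (hk'.add (const _ 1))) (hs hST hk' (hC'.beta hk')))
  refine ((DefinablePred.eq (hC.beta (const S 0)) hA).and
    ((hstep.all k).mono (Finset.erase_insert_subset k S))).congr fun v => ?_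
  simp [IsBetaRecTable, hC.dependsOn.apply_update hk, hN.dependsOn.apply_update hk,
    hs.dependsOn.apply_update hk]

theorem natRec (hA : DefinableFun S A) (hN : DefinableFun S N) (hs : DefinableOp₂ S s) :
    DefinableFun S fun v => Nat.rec (motive := fun _ => ℕ) (A v) (s v) (N v) where
  dependsOn _ _ h := by simp only [hA.dependsOn h, hN.dependsOn h, hs.dependsOn h]
  graph z _ := by
    obtain ⟨c, hcS, hcz⟩ := exists_fresh z S
    have hST : S ⊆ insert c (insert z S) :=
      (Finset.subset_insert z S).trans (Finset.subset_insert c _)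
    have hc' := var (Finset.mem_insert_self c (insert z S))
    have htable := isBetaRecTable (hA.mono hST) (hN.mono hST) hc' (hs.mono hST)
    refine ((htable.and (.eq (var (Finset.mem_insert_of_mem (Finset.mem_insert_self z S)))
      (hc'.beta (hN.mono hST)))).ex c |>.mono (Finset.erase_insert_subset c _)).congr fun v => ?_
    simp [update_of_ne hcz, hA.dependsOn.apply_update hcS, hN.dependsOn.apply_update hcS,
      hs.dependsOn.apply_update hcS, eq_rec_iff_exists_isBetaRecTable]

theorem primrec_comp {f : ℕ → ℕ} (hf : Nat.Primrec f) {F : (ℕ → ℕ) → ℕ}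
    (hF : DefinableFun S F) : DefinableFun S fun v => f (F v) := by
  induction hf generalizing S F with
  | zero => exact const S 0
  | succ => exact hF.add (const S 1)
  | left => exact hF.unpair_fst
  | right => exact hF.unpair_snd
  | pair _ _ ihf ihg => exact (ihf hF).pair (ihg hF)
  | comp _ _ ihf ihg => exact ihf (ihg hF)
  | prec _ _ ihf ihg =>
    exact natRec (ihf hF.unpair_fst) hF.unpair_snd fun _ _ _ hST hK hL =>
      ihg ((hF.unpair_fst.mono hST).pair (hK.pair hL))

end DefinableFun

/-! ### Substitution on Gödel numbers -/

/-- One step of substituting the term coded by `s` for `v₀` in the term coded by `x`, where `g`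
gives the results at smaller codes; numbers coding no term are left fixed. -/
def substTermCodeStep (s : ℕ) (g : ℕ → ℕ) (x : ℕ) : ℕ :=
  if x = Nat.pair 0 0 then s
  else if x.unpair.1 = 2 then Nat.pair 2 (g x.unpair.2)
  else if x.unpair.1 = 3 ∨ x.unpair.1 = 4 then
    Nat.pair x.unpair.1 (Nat.pair (g x.unpair.2.unpair.1) (g x.unpair.2.unpair.2))
  else x

def substTermCode (s x : ℕ) : ℕ :=
  substTermCodeStep s (fun y => if y < x then substTermCode s y else 0) x
termination_by x
decreasing_by assumption

/-- The analogue of `substTermCodeStep` for formulas; a quantifier binding `v₀` blocks the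
substitution. -/
def substFormulaCodeStep (s : ℕ) (g : ℕ → ℕ) (x : ℕ) : ℕ :=
  if x.unpair.1 ≤ 1 then
    Nat.pair x.unpair.1
      (Nat.pair (substTermCode s x.unpair.2.unpair.1) (substTermCode s x.unpair.2.unpair.2))
  else if x.unpair.1 = 2 then Nat.pair 2 (g x.unpair.2)
  else if x.unpair.1 ≤ 5 then
    Nat.pair x.unpair.1 (Nat.pair (g x.unpair.2.unpair.1) (g x.unpair.2.unpair.2))
  else if x.unpair.1 ≤ 7 ∧ x.unpair.2.unpair.1 ≠ 0 then
    Nat.pair x.unpair.1 (Nat.pair x.unpair.2.unpair.1 (g x.unpair.2.unpair.2))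
  else x

def substFormulaCode (s x : ℕ) : ℕ :=
  substFormulaCodeStep s (fun y => if y < x then substFormulaCode s y else 0) x
termination_by x
decreasing_by assumption

theorem substTermCodeStep_congr {s x : ℕ} {g g' : ℕ → ℕ} (h : ∀ y < x, g y = g' y) :
    substTermCodeStep s g x = substTermCodeStep s g' x := by
  unfold substTermCodeStep
  have hw : x.unpair.1 ≠ 0 → x.unpair.2 < x := Nat.unpair_snd_lt
  split_ifs
  · rfl
  · rw [h _ (hw (by omega))]
  · rw [h _ ((Nat.unpair_left_le _).trans_lt (hw (by omega))),
      h _ ((Nat.unpair_right_le _).trans_lt (hw (by omega)))]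
  · rfl

theorem substFormulaCodeStep_congr {s x : ℕ} {g g' : ℕ → ℕ} (h : ∀ y < x, g y = g' y) :
    substFormulaCodeStep s g x = substFormulaCodeStep s g' x := by
  unfold substFormulaCodeStep
  have hw : x.unpair.1 ≠ 0 → x.unpair.2 < x := Nat.unpair_snd_lt
  split_ifs
  · rfl
  · rw [h _ (hw (by omega))]
  · rw [h _ ((Nat.unpair_left_le _).trans_lt (hw (by omega))),
      h _ ((Nat.unpair_right_le _).trans_lt (hw (by omega)))]
  · rw [h _ ((Nat.unpair_right_le _).trans_lt (hw (by omega)))]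
  · rfl

theorem substTermCode_eq (s x : ℕ) :
    substTermCode s x = substTermCodeStep s (substTermCode s) x := by
  rw [substTermCode]
  exact substTermCodeStep_congr fun y hy => if_pos hy

theorem substFormulaCode_eq (s x : ℕ) :
    substFormulaCode s x = substFormulaCodeStep s (substFormulaCode s) x := by
  rw [substFormulaCode]
  exact substFormulaCodeStep_congr fun y hy => if_pos hy

theorem substTermCode_code (u t : Term) : substTermCode u.code t.code = (t.subst 0 u).code := by
  induction t with
  | var i =>
    rw [substTermCode_eq]
    rcases eq_or_ne i 0 with rfl | h
    · simp [substTermCodeStep, Term.code, Term.subst]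
    · simp [substTermCodeStep, Term.code, Term.subst, h, Nat.pair_eq_pair]
  | zero | succ | add | mul =>
    rw [substTermCode_eq]
    simp [substTermCodeStep, Term.code, Term.subst, Nat.pair_eq_pair, *]

theorem substFormulaCode_gnum (u : Term) (φ : Formula) :
    substFormulaCode u.code φ.gnum = (φ.subst 0 u).gnum := by
  induction φ with
  | all i φ ih | ex i φ ih =>
    rw [substFormulaCode_eq]
    rcases eq_or_ne i 0 with rfl | h
    · simp [substFormulaCodeStep, Formula.gnum, Formula.subst]
    · simp [substFormulaCodeStep, Formula.gnum, Formula.subst, h, ih]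
  | _ =>
    rw [substFormulaCode_eq]
    simp [substFormulaCodeStep, Formula.gnum, Formula.subst, substTermCode_code, *]

theorem _root_.List.getD_map_range {α : Type*} (f : ℕ → α) (n y : ℕ) (d : α) :
    ((List.range n).map f).getD y d = if y < n then f y else d := by
  simp only [List.getD_eq_getElem?_getD, List.getElem?_map]
  split_ifs <;> simp_all

section Primrec

variable {α : Type*} [Primcodable α] {s x : α → ℕ} {l : α → List ℕ}

theorem primrec_substTermCodeStep (hs : Primrec s) (hl : Primrec l) (hx : Primrec x) :
    Primrec fun a => substTermCodeStep (s a) (fun y => (l a).getD y 0) (x a) := by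
  have hk := Primrec.fst.comp (Primrec.unpair.comp hx)
  have hw := Primrec.snd.comp (Primrec.unpair.comp hx)
  have hw₁ := Primrec.fst.comp (Primrec.unpair.comp hw)
  have hw₂ := Primrec.snd.comp (Primrec.unpair.comp hw)
  have hg {f : α → ℕ} (hf : Primrec f) : Primrec fun a => (l a).getD (f a) 0 :=
    (Primrec.list_getD 0).comp hl hf
  exact Primrec.ite (Primrec.eq.comp hx (.const _)) hs <|
    .ite (Primrec.eq.comp hk (.const 2)) (Primrec₂.natPair.comp (.const 2) (hg hw)) <|
    .ite ((Primrec.eq.comp hk (.const 3)).or (Primrec.eq.comp hk (.const 4)))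
      (Primrec₂.natPair.comp hk (Primrec₂.natPair.comp (hg hw₁) (hg hw₂))) hx

theorem primrec_substTermCode : Primrec₂ substTermCode := by
  refine Primrec.nat_strong_rec _ (Primrec.option_some.comp <|
    primrec_substTermCodeStep .fst .snd (Primrec.list_length.comp .snd)).to₂ fun s n => ?_
  simp only [List.length_map, List.length_range, List.getD_map_range, Option.some.injEq]
  rw [substTermCode]

theorem primrec_substFormulaCodeStep (hs : Primrec s) (hl : Primrec l) (hx : Primrec x) :
    Primrec fun a => substFormulaCodeStep (s a) (fun y => (l a).getD y 0) (x a) := by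
  have hk := Primrec.fst.comp (Primrec.unpair.comp hx)
  have hw := Primrec.snd.comp (Primrec.unpair.comp hx)
  have hw₁ := Primrec.fst.comp (Primrec.unpair.comp hw)
  have hw₂ := Primrec.snd.comp (Primrec.unpair.comp hw)
  have hg {f : α → ℕ} (hf : Primrec f) : Primrec fun a => (l a).getD (f a) 0 :=
    (Primrec.list_getD 0).comp hl hf
  exact Primrec.ite (Primrec.nat_le.comp hk (.const 1))
      (Primrec₂.natPair.comp hk (Primrec₂.natPair.comp (primrec_substTermCode.comp hs hw₁)
        (primrec_substTermCode.comp hs hw₂))) <|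
    .ite (Primrec.eq.comp hk (.const 2)) (Primrec₂.natPair.comp (.const 2) (hg hw)) <|
    .ite (Primrec.nat_le.comp hk (.const 5))
      (Primrec₂.natPair.comp hk (Primrec₂.natPair.comp (hg hw₁) (hg hw₂))) <|
    .ite ((Primrec.nat_le.comp hk (.const 7)).and (Primrec.eq.comp hw₁ (.const 0)).not)
      (Primrec₂.natPair.comp hk (Primrec₂.natPair.comp hw₁ (hg hw₂))) hx

theorem primrec_substFormulaCode : Primrec₂ substFormulaCode := by
  refine Primrec.nat_strong_rec _ (Primrec.option_some.comp <|
    primrec_substFormulaCodeStep .fst .snd (Primrec.list_length.comp .snd)).to₂ fun s n => ?_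
  simp only [List.length_map, List.length_range, List.getD_map_range, Option.some.injEq]
  rw [substFormulaCode]

end Primrec

theorem primrec_code_numeral : Primrec fun n => (numeral n).code :=
  (Primrec.nat_rec₁ (Nat.pair 1 0) (Primrec₂.natPair.comp (.const 2) .snd).to₂).of_eq fun n => by
    induction n with
    | zero => rfl
    | succ n ih => simp [ih, numeral, Term.code]

def diag (e : ℕ) : ℕ := substFormulaCode (numeral e).code e

theorem diag_gnum (φ : Formula) : diag φ.gnum = (φ.subst 0 (numeral φ.gnum)).gnum :=
  substFormulaCode_gnum _ φ

theorem primrec_diag : Nat.Primrec diag :=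
  Primrec.nat_iff.1 (primrec_substFormulaCode.comp primrec_code_numeral .id)

/-! ### The diagonal argument -/

theorem DefinesSet.definablePred {φ : Formula} {A : Set ℕ} (h : DefinesSet φ A) :
    DefinablePred {0} fun v => v 0 ∈ A := by
  refine ⟨φ, h.1, fun v => ?_⟩
  have hv : ∀ w, φ.Realize stdModel (update w 0 (v 0)) ↔ φ.Realize stdModel v := fun w =>
    Formula.realize_congr fun i hi => by rw [Finset.mem_singleton.1 (h.1 hi), update_self]
  simp only [h.2, IsTrue, Formula.realize_subst_numeral, hv, forall_const]

theorem DefinablePred.exists_fresh_var {P : ℕ → Prop} (h : DefinablePred {0} fun v => P (v 0))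
    (T : Finset ℕ) : ∃ y ∉ T, DefinablePred {y} fun v => P (v y) := by
  obtain ⟨φ, hφ, hφP⟩ := h
  obtain ⟨y, hy⟩ := Infinite.exists_notMem_finset (T ∪ φ.allVars)
  rw [Finset.mem_union, not_or] at hy
  refine ⟨y, hy.1, φ.subst 0 (.var y), Formula.freeVars_subst.trans ?_, fun v => ?_⟩
  · rw [(Finset.erase_eq_empty_iff _ _).2 (Finset.subset_singleton_iff.1 hφ), Finset.empty_union]
    rfl
  · rw [Formula.realize_subst (by simpa [Term.varsOf] using hy.2), hφP]
    simp only [update_self]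
    rfl

theorem exists_isSentence_isTrue_iff {P : ℕ → Prop} (hP : DefinablePred {0} fun v => P (v 0)) :
    ∃ σ : Formula, σ.IsSentence ∧ (IsTrue σ ↔ P σ.gnum) := by
  obtain ⟨y, hy, hPy⟩ := hP.exists_fresh_var {0}
  obtain ⟨ψ, hψ, hψP⟩ : DefinablePred {0} fun v => P (diag (v 0)) :=
    ((hPy.mono (Finset.singleton_subset_iff.2 (Finset.mem_insert_self y {0}))).subst hy
      (.primrec_comp primrec_diag (.var (Finset.mem_singleton_self 0)))).congr fun v => by
      rw [update_self]
  refine ⟨ψ.subst 0 (numeral ψ.gnum), Formula.freeVars_subst_eq_empty hψ (varsOf_numeral _), ?_⟩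
  simp only [IsTrue, Formula.realize_subst_numeral, hψP, update_self, diag_gnum, forall_const]

/-- **Tarski's theorem.** The set of Gödel numbers of true sentences is not definable. -/
theorem tarski_undefinability :
    ¬ Definable {m : ℕ | ∃ σ : Formula, σ.IsSentence ∧ IsTrue σ ∧ m = σ.gnum} := by
  rintro ⟨φ, hφ⟩
  obtain ⟨σ, hσ, hσ_true⟩ := exists_isSentence_isTrue_iff (P := (· ∉ _)) hφ.definablePred.not
  have hσ_mem : σ.gnum ∈ {m : ℕ | ∃ σ : Formula, σ.IsSentence ∧ IsTrue σ ∧ m = σ.gnum} ↔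
      IsTrue σ :=
    ⟨fun ⟨_, _, hτ, h⟩ => Formula.gnum_injective h ▸ hτ, fun h => ⟨σ, hσ, h, rfl⟩⟩
  exact iff_not_self (hσ_true.trans (not_congr hσ_mem))

end Boolos
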